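/- Let Ω be a nonempty bounded open subset of ℝ^d (d ≥ 1), equipped with Lebesgue measure. Let a > 0, b, c ∈ ℝ and r ∈ (0,1). Then there exists a constant C, depending only on the Lebesgue measure |Ω|, a, b, c and r, such that every p ∈ L²(Ω) with p ≥ 0 almost everywhere in Ω satisfying both ‖p − m(p)‖_{L²(Ω)} ≤ a ‖p‖_{L²(Ω)}^r + b and ∫_Ω p^r dx ≤ c, also satisfies ‖p‖_{L²(Ω)} ≤ C. -/

import Mathlib

/-!
Hölder's inequality interpolates `L¹` between `Lʳ` and `L²`:
`∫ p ≤ (∫ p ^ r) ^ (1 / (2 - r)) * ‖p‖₂ ^ t` with `t = 2 (1 - r) / (2 - r) < 1`.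
Hence the mean value of `p` is controlled by `‖p‖₂ ^ t`, and the triangle inequality
`‖p‖₂ ≤ ‖p - m(p)‖₂ + m(p) |Ω| ^ (1/2)` yields `N ≤ a N ^ r + b + K N ^ t` for `N = ‖p‖₂`.
Both exponents being below `1`, this forces `N` to be bounded.
-/

open MeasureTheory
open scoped ENNReal

namespace Real

theorem le_rpow_inv_one_sub_of_le_mul_rpow {N E s : ℝ} (hN : 0 < N) (hs : s < 1)
    (h : N ≤ E * N ^ s) : N ≤ E ^ (1 - s)⁻¹ := by
  have hpow : N ^ (1 - s) ≤ E := by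
    rwa [rpow_sub hN, rpow_one, div_le_iff₀ (rpow_pos_of_pos hN s)]
  calc N = (N ^ (1 - s)) ^ (1 - s)⁻¹ := by
        rw [← rpow_mul hN.le, mul_inv_cancel₀ (by linarith), rpow_one]
    _ ≤ E ^ (1 - s)⁻¹ := rpow_le_rpow (by positivity) hpow (inv_nonneg.2 (by linarith))

theorem mul_rpow_le_abs_mul_rpow {N q s : ℝ} (k : ℝ) (hN : 1 ≤ N) (hqs : q ≤ s) :
    k * N ^ q ≤ |k| * N ^ s :=
  calc k * N ^ q ≤ |k| * N ^ q :=
        mul_le_mul_of_nonneg_right (le_abs_self k) (by positivity)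
    _ ≤ |k| * N ^ s :=
        mul_le_mul_of_nonneg_left (rpow_le_rpow_of_exponent_le hN hqs) (abs_nonneg k)

theorem exists_bound_of_le_mul_rpow_add_mul_rpow (a b K : ℝ) {r t : ℝ} (hr : r < 1) (ht : t < 1) :
    ∃ C, ∀ N : ℝ, N ≤ a * N ^ r + b + K * N ^ t → N ≤ C := by
  set s := max (max r t) 0
  refine ⟨max 1 ((|a| + |b| + |K|) ^ (1 - s)⁻¹), fun N hN => ?_⟩
  rcases le_or_gt N 1 with hN1 | hN1
  · exact hN1.trans (le_max_left _ _)
  refine le_max_of_le_right (le_rpow_inv_one_sub_of_le_mul_rpow (by linarith)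
    (max_lt (max_lt hr ht) one_pos) ?_)
  have hb : b ≤ |b| * N ^ s := by
    simpa using mul_rpow_le_abs_mul_rpow b hN1.le (le_max_right (max r t) 0)
  have ha := mul_rpow_le_abs_mul_rpow a hN1.le ((le_max_left r t).trans (le_max_left _ 0))
  have hK := mul_rpow_le_abs_mul_rpow K hN1.le ((le_max_right r t).trans (le_max_left _ 0))
  linarith

end Real

section

variable {α : Type*} [MeasurableSpace α] {μ : Measure α}

theorem ENNReal.lintegral_le_lintegral_rpow_mul_lintegral_sq {f : α → ℝ≥0∞}
    (hf : AEMeasurable f μ) {r : ℝ} (hr0 : 0 ≤ r) (hr1 : r < 1) :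
    ∫⁻ x, f x ∂μ ≤
      (∫⁻ x, f x ^ r ∂μ) ^ (2 - r)⁻¹ * (∫⁻ x, f x ^ (2 : ℝ) ∂μ) ^ ((1 - r) / (2 - r)) := by
  have h2r : 0 < 2 - r := by linarith
  have hq : 0 ≤ (1 - r) / (2 - r) := div_nonneg (by linarith) h2r.le
  have hexp : r * (2 - r)⁻¹ + 2 * ((1 - r) / (2 - r)) = 1 := by field_simp; ring
  calc ∫⁻ x, f x ∂μ
      = ∫⁻ x, (f x ^ r) ^ (2 - r)⁻¹ * (f x ^ (2 : ℝ)) ^ ((1 - r) / (2 - r)) ∂μ := by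
        refine lintegral_congr fun x => ?_
        rw [← ENNReal.rpow_mul, ← ENNReal.rpow_mul, ← ENNReal.rpow_add_of_nonneg _ _
          (mul_nonneg hr0 (inv_nonneg.2 h2r.le)) (mul_nonneg zero_le_two hq), hexp,
          ENNReal.rpow_one]
    _ ≤ _ := ENNReal.lintegral_mul_norm_pow_le (hf.pow_const r) (hf.pow_const 2)
        (inv_nonneg.2 h2r.le) hq (by field_simp; ring)

theorem lintegral_ofReal_sq_eq_eLpNorm_sq {p : α → ℝ} (hp0 : 0 ≤ᵐ[μ] p) :
    ∫⁻ x, ENNReal.ofReal (p x) ^ (2 : ℝ) ∂μ = eLpNorm p 2 μ ^ (2 : ℝ) := by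
  rw [eLpNorm_eq_eLpNorm' two_ne_zero ENNReal.ofNat_ne_top, ENNReal.toReal_ofNat,
    ← lintegral_rpow_enorm_eq_rpow_eLpNorm' two_pos]
  refine lintegral_congr_ae ?_
  filter_upwards [hp0] with x hx
  rw [Real.enorm_eq_ofReal hx]

theorem integral_le_integral_rpow_mul_eLpNorm {p : α → ℝ} {r : ℝ} (hp : MemLp p 2 μ)
    (hpr : Integrable (fun x => p x ^ r) μ) (hp0 : 0 ≤ᵐ[μ] p) (hr0 : 0 ≤ r) (hr1 : r < 1) :
    ∫ x, p x ∂μ ≤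
      (∫ x, p x ^ r ∂μ) ^ (2 - r)⁻¹ * (eLpNorm p 2 μ).toReal ^ (2 * (1 - r) / (2 - r)) := by
  have h2r : 0 < 2 - r := by linarith
  have hpow_r : ∫⁻ x, ENNReal.ofReal (p x) ^ r ∂μ = ENNReal.ofReal (∫ x, p x ^ r ∂μ) := by
    rw [ofReal_integral_eq_lintegral_ofReal hpr (hp0.mono fun x hx => Real.rpow_nonneg hx r)]
    refine lintegral_congr_ae ?_
    filter_upwards [hp0] with x hx
    exact ENNReal.ofReal_rpow_of_nonneg hx hr0
  have hinterp := ENNReal.lintegral_le_lintegral_rpow_mul_lintegral_sq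
    (f := fun x => ENNReal.ofReal (p x)) hp.1.aemeasurable.ennreal_ofReal hr0 hr1
  rw [hpow_r, lintegral_ofReal_sq_eq_eLpNorm_sq hp0, ← ENNReal.rpow_mul, ← mul_div_assoc]
    at hinterp
  rw [integral_eq_lintegral_of_nonneg_ae hp0 hp.1,
    ← ENNReal.toReal_ofReal (integral_nonneg_of_ae (hp0.mono fun x hx => Real.rpow_nonneg hx r)),
    ENNReal.toReal_rpow, ENNReal.toReal_rpow, ← ENNReal.toReal_mul]
  refine ENNReal.toReal_mono (ENNReal.mul_ne_top ?_ ?_) hinterp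
  · exact ENNReal.rpow_ne_top_of_nonneg (inv_nonneg.2 h2r.le) ENNReal.ofReal_ne_top
  · exact ENNReal.rpow_ne_top_of_nonneg (by positivity) hp.2.ne

theorem toReal_eLpNorm_le_sub_const_add [IsFiniteMeasure μ] {p : α → ℝ} (hp : MemLp p 2 μ)
    (M : ℝ) :
    (eLpNorm p 2 μ).toReal ≤
      (eLpNorm (fun x => p x - M) 2 μ).toReal + |M| * μ.real Set.univ ^ (2⁻¹ : ℝ) := by
  have hconst : eLpNorm (fun _ => M) 2 μ = ‖M‖ₑ * μ Set.univ ^ (2⁻¹ : ℝ) := by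
    simp [eLpNorm_const' M two_ne_zero ENNReal.ofNat_ne_top]
  calc (eLpNorm p 2 μ).toReal
      = (eLpNorm ((fun x => p x - M) + fun _ => M) 2 μ).toReal := by
        congr; ext x; simp
    _ ≤ (eLpNorm (fun x => p x - M) 2 μ).toReal + (eLpNorm (fun _ => M) 2 μ).toReal :=
        ENNReal.toReal_le_add (eLpNorm_add_le (hp.1.sub aestronglyMeasurable_const)
          aestronglyMeasurable_const one_le_two) (hp.sub (memLp_const M)).2.ne (memLp_const M).2.ne
    _ = _ := by
        rw [hconst, ENNReal.toReal_mul, ← ENNReal.toReal_rpow, toReal_enorm, Real.norm_eq_abs,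
          measureReal_def]

theorem integrable_rpow_of_memLp [IsFiniteMeasure μ] {p : α → ℝ} {q : ℝ≥0∞} {r : ℝ}
    (hp : MemLp p q μ) (hp0 : 0 ≤ᵐ[μ] p) (hr0 : 0 ≤ r) (hrq : ENNReal.ofReal r ≤ q) :
    Integrable (fun x => p x ^ r) μ := by
  refine (hp.mono_exponent hrq).integrable_norm_rpow'.congr ?_
  filter_upwards [hp0] with x hx
  rw [ENNReal.toReal_ofReal hr0, Real.norm_of_nonneg hx]

theorem exists_bound_eLpNorm_of_eLpNorm_sub_average_le [IsFiniteMeasure μ] {r : ℝ}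
    (hr0 : 0 < r) (hr1 : r < 1) (a b c : ℝ) :
    ∃ C, ∀ p : α → ℝ, MemLp p 2 μ → 0 ≤ᵐ[μ] p →
      (eLpNorm (fun x => p x - ⨍ y, p y ∂μ) 2 μ).toReal ≤ a * (eLpNorm p 2 μ).toReal ^ r + b →
      ∫ x, p x ^ r ∂μ ≤ c → (eLpNorm p 2 μ).toReal ≤ C := by
  set V := μ.real Set.univ
  have ht : 2 * (1 - r) / (2 - r) < 1 := by rw [div_lt_one (by linarith)]; linarith
  obtain ⟨C, hC⟩ := Real.exists_bound_of_le_mul_rpow_add_mul_rpow a b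
    (V⁻¹ * V ^ (2⁻¹ : ℝ) * |c| ^ (2 - r)⁻¹) hr1 ht
  refine ⟨C, fun p hp hp0 hdev hc => hC _ ?_⟩
  set N := (eLpNorm p 2 μ).toReal
  have hpr : Integrable (fun x => p x ^ r) μ := integrable_rpow_of_memLp hp hp0 hr0.le
    (by rw [ENNReal.ofReal_le_iff_le_toReal ENNReal.ofNat_ne_top]; norm_num; linarith)
  have havg : |⨍ y, p y ∂μ| * V ^ (2⁻¹ : ℝ) ≤
      V⁻¹ * V ^ (2⁻¹ : ℝ) * |c| ^ (2 - r)⁻¹ * N ^ (2 * (1 - r) / (2 - r)) := by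
    have hint := integral_nonneg_of_ae hp0
    have hintr := integral_nonneg_of_ae (hp0.mono fun x hx => Real.rpow_nonneg hx r)
    have hexp : 0 ≤ (2 - r)⁻¹ := inv_nonneg.2 (by linarith)
    rw [average_eq, smul_eq_mul, abs_of_nonneg (by positivity)]
    calc V⁻¹ * (∫ x, p x ∂μ) * V ^ (2⁻¹ : ℝ)
        ≤ V⁻¹ * ((∫ x, p x ^ r ∂μ) ^ (2 - r)⁻¹ * N ^ (2 * (1 - r) / (2 - r))) *
            V ^ (2⁻¹ : ℝ) := by
          gcongr
          exact integral_le_integral_rpow_mul_eLpNorm hp hpr hp0 hr0.le hr1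
      _ ≤ V⁻¹ * (|c| ^ (2 - r)⁻¹ * N ^ (2 * (1 - r) / (2 - r))) * V ^ (2⁻¹ : ℝ) := by
          gcongr
          exact hc.trans (le_abs_self c)
      _ = _ := by ring
  calc N ≤ (eLpNorm (fun x => p x - ⨍ y, p y ∂μ) 2 μ).toReal + |⨍ y, p y ∂μ| * V ^ (2⁻¹ : ℝ) :=
        toReal_eLpNorm_le_sub_const_add hp _
    _ ≤ _ := add_le_add hdev havg

end

theorem stmt0_general (d : ℕ) (Ω : Set (EuclideanSpace ℝ (Fin d)))
    (hΩbdd : Bornology.IsBounded Ω)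
    (a b c r : ℝ) (hr : r ∈ Set.Ioo (0 : ℝ) 1) :
    ∃ C : ℝ, ∀ p : EuclideanSpace ℝ (Fin d) → ℝ,
      MemLp p 2 (volume.restrict Ω) →
      (∀ᵐ x ∂(volume.restrict Ω), 0 ≤ p x) →
      (eLpNorm (fun x => p x - (volume Ω).toReal⁻¹ * ∫ y in Ω, p y) 2
          (volume.restrict Ω)).toReal
        ≤ a * ((eLpNorm p 2 (volume.restrict Ω)).toReal) ^ r + b →
      (∫ x in Ω, p x ^ r) ≤ c →
      (eLpNorm p 2 (volume.restrict Ω)).toReal ≤ C := by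
  have : IsFiniteMeasure (volume.restrict Ω) :=
    isFiniteMeasure_restrict.2 hΩbdd.measure_lt_top.ne
  obtain ⟨C, hC⟩ := exists_bound_eLpNorm_of_eLpNorm_sub_average_le hr.1 hr.2 a b c
    (μ := volume.restrict Ω)
  refine ⟨C, fun p hp hp0 hdev hc => hC p hp hp0 ?_ hc⟩
  rwa [setAverage_eq, smul_eq_mul, measureReal_def]

/-- Lemma 2.2: an `L²` bound for a nonnegative function whose distance to its
mean value is controlled by a sublinear power of its `L²` norm and whose
`r`-th power has bounded integral. -/
theorem stmt0 (d : ℕ) (hd : 1 ≤ d) (Ω : Set (EuclideanSpace ℝ (Fin d)))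
    (hΩne : Ω.Nonempty) (hΩopen : IsOpen Ω) (hΩbdd : Bornology.IsBounded Ω)
    (a b c r : ℝ) (ha : 0 < a) (hr : r ∈ Set.Ioo (0 : ℝ) 1) :
    ∃ C : ℝ, ∀ p : EuclideanSpace ℝ (Fin d) → ℝ,
      MemLp p 2 (volume.restrict Ω) →
      (∀ᵐ x ∂(volume.restrict Ω), 0 ≤ p x) →
      (eLpNorm (fun x => p x - (volume Ω).toReal⁻¹ * ∫ y in Ω, p y) 2
          (volume.restrict Ω)).toReal
        ≤ a * ((eLpNorm p 2 (volume.restrict Ω)).toReal) ^ r + b →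
      (∫ x in Ω, p x ^ r) ≤ c →
      (eLpNorm p 2 (volume.restrict Ω)).toReal ≤ C :=
  stmt0_general d Ω hΩbdd a b c r hr
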